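/- Let $f_0$ be continuous and non-monotone on $[0,1]$ with a dip of size $2\epsilon > 0$ on an interval of positive $Q$-measure, where $Q$ is a probability measure with full support on $(0,1)$. Then there exists $\psi > 0$ such that $\sup_{f_1 \text{ non-decreasing}} \int_0^1 \exp\{-\psi (f_0(x) - f_1(x))^2\}\, Q(dx) < 1$. -/

import Mathlib

open MeasureTheory Set Filter Topology

/-! Fix `m ∈ (s₁, s₂)`. A non-decreasing `f₁` either has `f₁ m ≥ f₀ s₁ - ε`, and then stays
above that level on an interval just left of `s₂`, or stays below it on an interval just right of
`s₁`. By continuity `f₀` is within `ε/2` of `f₀ s₂`, resp. `f₀ s₁`, there, so `|f₀ - f₁| ≥ ε/2` on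
one of two fixed intervals of positive `Q`-measure, where the integrand is at most
`exp (-(ε/2)²) < 1`; elsewhere it is at most `1`. -/

theorem ContinuousOn.exists_Ioo_right_lt {f : ℝ → ℝ} {a b s c y : ℝ}
    (hf : ContinuousOn f (Icc a b)) (hs : s ∈ Ico a b) (hsc : s < c) (hy : y < f s) :
    ∃ u ∈ Ioc s c, ∀ x ∈ Ioo s u, y < f x :=
  (mem_nhdsGT_iff_exists_mem_Ioc_Ioo_subset hsc).1 <|
    nhdsWithin_le_of_mem (Icc_mem_nhdsGT_of_mem hs)
      ((hf s (Ico_subset_Icc_self hs)).eventually_const_lt hy)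

theorem ContinuousOn.exists_Ioo_left_gt {f : ℝ → ℝ} {a b s c y : ℝ}
    (hf : ContinuousOn f (Icc a b)) (hs : s ∈ Ioc a b) (hcs : c < s) (hy : f s < y) :
    ∃ l ∈ Ico c s, ∀ x ∈ Ioo l s, f x < y :=
  (mem_nhdsLT_iff_exists_mem_Ico_Ioo_subset hcs).1 <|
    nhdsWithin_le_of_mem (Icc_mem_nhdsLT_of_mem hs)
      ((hf s (Ioc_subset_Icc_self hs)).eventually_lt_const hy)

theorem MonotoneOn.le_abs_sub_on_left_or_right {α : Type*} [Preorder α] {f g : α → ℝ}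
    {D I J : Set α} {b : α} {u v δ : ℝ} (hg : MonotoneOn g D) (hb : b ∈ D) (hID : I ⊆ D)
    (hJD : J ⊆ D) (hIb : ∀ x ∈ I, x ≤ b) (hJb : ∀ x ∈ J, b ≤ x) (hfI : ∀ x ∈ I, u < f x)
    (hfJ : ∀ x ∈ J, f x < v) (huv : v + 2 * δ ≤ u) :
    (∀ x ∈ I, δ ≤ |f x - g x|) ∨ (∀ x ∈ J, δ ≤ |f x - g x|) := by
  by_cases hgb : u - δ ≤ g b
  · refine Or.inr fun x hx => ?_
    have := hg hb (hJD hx) (hJb x hx)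
    rw [abs_sub_comm]
    exact le_abs.2 (Or.inl (by linarith [hfJ x hx]))
  · refine Or.inl fun x hx => ?_
    have := hg (hID hx) hb (hIb x hx)
    exact le_abs.2 (Or.inl (by linarith [hfI x hx]))

theorem Real.exp_neg_mul_sq_le_of_le_abs {ψ δ t : ℝ} (hψ : 0 ≤ ψ) (hδ : 0 ≤ δ)
    (h : δ ≤ |t|) : Real.exp (-ψ * t ^ 2) ≤ Real.exp (-ψ * δ ^ 2) := by
  have : δ ^ 2 ≤ t ^ 2 := sq_abs t ▸ pow_le_pow_left₀ hδ h 2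
  exact Real.exp_le_exp.2 (by nlinarith)

theorem integral_le_one_sub_mul_measureReal {α : Type*} [MeasurableSpace α] {μ : Measure α}
    [IsProbabilityMeasure μ] {g : α → ℝ} {S : Set α} {r : ℝ} (hS : MeasurableSet S) (hr : 0 ≤ r)
    (hg : ∀ x, g x ≤ 1) (hgS : ∀ x ∈ S, g x ≤ r) :
    ∫ x, g x ∂μ ≤ 1 - (1 - r) * μ.real S := by
  by_cases hint : Integrable g μ
  · have hbound_int : Integrable (fun x => 1 - (1 - r) * S.indicator 1 x) μ :=
      (integrable_const 1).sub (((integrable_const 1).indicator hS).const_mul _)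
    have hbound : ∀ x, g x ≤ 1 - (1 - r) * S.indicator 1 x := by
      intro x
      by_cases hx : x ∈ S
      · simpa [hx] using hgS x hx
      · simpa [hx] using hg x
    calc ∫ x, g x ∂μ ≤ ∫ x, (1 - (1 - r) * S.indicator 1 x) ∂μ :=
          integral_mono hint hbound_int hbound
      _ = 1 - (1 - r) * μ.real S := by
          rw [integral_sub (integrable_const 1) (((integrable_const 1).indicator hS).const_mul _),
            integral_const_mul, integral_indicator_one hS]
          simp
  · rw [integral_undef hint, sub_nonneg]
    by_cases hr1 : r ≤ 1
    · exact mul_le_one₀ (by linarith) measureReal_nonneg measureReal_le_one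
    · exact (mul_nonpos_of_nonpos_of_nonneg (by linarith) measureReal_nonneg).trans zero_le_one

theorem stmt_12_general (f₀ : ℝ → ℝ) (hf₀ : ContinuousOn f₀ (Icc 0 1))
    (ε : ℝ) (hε : 0 < ε)
    (s₁ s₂ : ℝ) (hs₁ : s₁ ∈ Icc (0 : ℝ) 1) (hs₂ : s₂ ∈ Icc (0 : ℝ) 1)
    (hlt : s₁ < s₂) (hdip : 2 * ε ≤ f₀ s₁ - f₀ s₂)
    (Q : Measure ℝ) [IsProbabilityMeasure Q]
    (hQfull : ∀ a b : ℝ, 0 ≤ a → a < b → b ≤ 1 → 0 < Q (Ioo a b)) :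
    ∃ ψ > (0 : ℝ), ∃ c < (1 : ℝ), ∀ f₁ : ℝ → ℝ, MonotoneOn f₁ (Icc 0 1) →
      ∫ x, Real.exp (-ψ * (f₀ x - f₁ x) ^ 2) ∂Q ≤ c := by
  obtain ⟨m, hs₁m, hms₂⟩ := exists_between hlt
  obtain ⟨u, ⟨hs₁u, hum⟩, hI⟩ := hf₀.exists_Ioo_right_lt ⟨hs₁.1, hs₁m.trans hms₂ |>.trans_le hs₂.2⟩
    hs₁m (show f₀ s₁ - ε / 2 < f₀ s₁ by linarith)
  obtain ⟨l, ⟨hml, hls₂⟩, hJ⟩ := hf₀.exists_Ioo_left_gt ⟨hs₁.1.trans_lt hlt, hs₂.2⟩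
    hms₂ (show f₀ s₂ < f₀ s₂ + ε / 2 by linarith)
  have hQpos : ∀ a b, 0 ≤ a → a < b → b ≤ 1 → 0 < Q.real (Ioo a b) := fun a b ha hab hb =>
    ENNReal.toReal_pos (hQfull a b ha hab hb).ne' (measure_ne_top _ _)
  set q := min (Q.real (Ioo s₁ u)) (Q.real (Ioo l s₂))
  have hq : 0 < q := lt_min (hQpos s₁ u hs₁.1 hs₁u (by linarith [hs₂.2]))
    (hQpos l s₂ (by linarith [hs₁.1]) hls₂ hs₂.2)
  set r := Real.exp (-1 * (ε / 2) ^ 2)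
  have hr : r < 1 := Real.exp_lt_one_iff.2 (by nlinarith)
  refine ⟨1, one_pos, 1 - (1 - r) * q, by nlinarith, fun f₁ hf₁ => ?_⟩
  have bound_of_far : ∀ S, MeasurableSet S → q ≤ Q.real S → (∀ x ∈ S, ε / 2 ≤ |f₀ x - f₁ x|) →
      ∫ x, Real.exp (-1 * (f₀ x - f₁ x) ^ 2) ∂Q ≤ 1 - (1 - r) * q := fun S hS hqS hfar =>
    (integral_le_one_sub_mul_measureReal hS (Real.exp_pos _).le
      (fun x => Real.exp_le_one_iff.2 (by nlinarith))
      fun x hx => Real.exp_neg_mul_sq_le_of_le_abs zero_le_one (by positivity) (hfar x hx)).trans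
      (by nlinarith)
  have hIcc : Ioo s₁ u ⊆ Icc 0 1 :=
    Ioo_subset_Icc_self.trans (Icc_subset_Icc hs₁.1 (by linarith [hs₂.2]))
  have hJcc : Ioo l s₂ ⊆ Icc 0 1 :=
    Ioo_subset_Icc_self.trans (Icc_subset_Icc (by linarith [hs₁.1]) hs₂.2)
  rcases hf₁.le_abs_sub_on_left_or_right (b := m) (δ := ε / 2)
    ⟨by linarith [hs₁.1], by linarith [hs₂.2]⟩ hIcc hJcc (fun x hx => by linarith [hx.2]) (fun x hx => by linarith [hx.1]) hI hJ
    (by linarith) with hfar | hfar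
  · exact bound_of_far _ measurableSet_Ioo (min_le_left _ _) hfar
  · exact bound_of_far _ measurableSet_Ioo (min_le_right _ _) hfar

/-- If `f₀` is continuous with a dip of size `2ε` and `Q` has full support on `(0,1)`, then
for some `ψ > 0` the integral `∫ exp{-ψ(f₀-f₁)²} dQ` is bounded away from `1`, uniformly over
all non-decreasing `f₁`. -/
theorem stmt_12 (f₀ : ℝ → ℝ) (hf₀ : ContinuousOn f₀ (Icc 0 1))
    (ε : ℝ) (hε : 0 < ε)
    (s₁ s₂ : ℝ) (hs₁ : s₁ ∈ Icc (0 : ℝ) 1) (hs₂ : s₂ ∈ Icc (0 : ℝ) 1)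
    (hlt : s₁ < s₂) (hdip : 2 * ε ≤ f₀ s₁ - f₀ s₂)
    (Q : Measure ℝ) [IsProbabilityMeasure Q]
    (hQsupp : Q (Ioo (0 : ℝ) 1) = 1)
    (hQfull : ∀ a b : ℝ, 0 ≤ a → a < b → b ≤ 1 → 0 < Q (Ioo a b)) :
    ∃ ψ > (0 : ℝ), ∃ c < (1 : ℝ), ∀ f₁ : ℝ → ℝ, MonotoneOn f₁ (Icc 0 1) →
      ∫ x, Real.exp (-ψ * (f₀ x - f₁ x) ^ 2) ∂Q ≤ c :=
  stmt_12_general f₀ hf₀ ε hε s₁ s₂ hs₁ hs₂ hlt hdip Q hQfull
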